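/- arXiv:2305.05051 — 7 statements merged into one kernel-verified Lean document; each statement's English description precedes it below -/
import Mathlib

section
/- Every abelian group embeds into a divisible abelian group of which it is an essential subgroup. -/
/-!
Embed `G` into the product `D` of copies of `ℚ/ℤ` indexed by its characters; `D` is divisible.
By Zorn's lemma choose a subgroup `C ≤ D` maximal among those meeting the image of `G` trivially.
Then `G` still embeds into the divisible group `D ⧸ C`, and a nontrivial `K ≤ D ⧸ C` pulls back to
a subgroup strictly larger than `C`, which by maximality meets the image of `G` nontrivially.
-/

open Function

namespace Subgroup

variable {G : Type*} [Group G]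

def IsEssential (S : Subgroup G) : Prop :=
  ∀ K : Subgroup G, K ≠ ⊥ → S ⊓ K ≠ ⊥

theorem exists_maximal_disjoint (S : Subgroup G) : ∃ C : Subgroup G, Maximal (Disjoint · S) C := by
  obtain ⟨C, -, hC⟩ := zorn_le_nonempty₀ {C : Subgroup G | Disjoint C S}
    (fun c hcS hchain C₀ hC₀ => by
      refine ⟨sSup c, ?_, fun _ => le_sSup⟩
      refine disjoint_def.2 fun hx hxS => ?_
      obtain ⟨C, hC, hxC⟩ := (mem_sSup_of_directedOn ⟨C₀, hC₀⟩ hchain.directedOn).1 hx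
      exact disjoint_def.1 (hcS hC) hxC hxS)
    ⊥ disjoint_bot_left
  exact ⟨C, hC⟩

end Subgroup

section MaximalDisjoint

open Subgroup QuotientGroup

variable {D : Type*} [CommGroup D] {S C : Subgroup D}

theorem injective_mk'_comp_of_maximal_disjoint {G : Type*} [Group G] {ι : G →* D}
    (hι : Injective ι) (hC : Maximal (Disjoint · ι.range) C) : Injective ((mk' C).comp ι) :=
  (injective_iff_map_eq_one _).2 fun a ha =>
    (hι.eq_iff' (map_one ι)).1 (disjoint_def.1 hC.1 ((eq_one_iff _).1 ha) ⟨a, rfl⟩)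

theorem isEssential_map_mk'_of_maximal_disjoint (hC : Maximal (Disjoint · S) C) :
    (S.map (mk' C)).IsEssential := by
  intro K hK
  have hCK : C ≤ K.comap (mk' C) := fun x hx => by
    rw [mem_comap, mk'_apply, (eq_one_iff x).2 hx]
    exact K.one_mem
  have hmeet : ¬Disjoint (K.comap (mk' C)) S := fun hdisj => hK <| by
    rw [← map_comap_eq_self_of_surjective (mk'_surjective C) K, ← le_bot_iff, ← map_mk'_self C]
    exact map_mono (hC.2 hdisj hCK)
  simp only [disjoint_def, not_forall] at hmeet
  obtain ⟨s, hsK, hsS, hs⟩ := hmeet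
  rw [Ne, ← disjoint_iff, disjoint_def]
  intro h
  exact hs (disjoint_def.1 hC.1 ((eq_one_iff s).1 (h (mem_map_of_mem _ hsS) hsK)) hsS)

end MaximalDisjoint

noncomputable instance Multiplicative.rootableByInt {A : Type*} [AddGroup A] [DivisibleBy A ℤ] :
    RootableBy (Multiplicative A) ℤ where
  root x n := .ofAdd (DivisibleBy.div x.toAdd n)
  root_zero x := DivisibleBy.div_zero x.toAdd
  root_cancel x hn := DivisibleBy.div_cancel x.toAdd hn

noncomputable def characterEmbedding (G : Type*) [CommGroup G] :
    G →* Multiplicative (CharacterModule (Additive G) → AddCircle (1 : ℚ)) :=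
  AddMonoidHom.toMultiplicativeRight (AddMonoidHom.pi fun c => c)

theorem characterEmbedding_injective (G : Type*) [CommGroup G] :
    Injective (characterEmbedding G) :=
  (injective_iff_map_eq_one _).2 fun _ h =>
    CharacterModule.eq_zero_of_character_apply fun c => congr_fun h c

/-- Every abelian group embeds into a divisible abelian group of which
it is an essential subgroup. -/
theorem stmt_1 (G : Type) [CommGroup G] :
    ∃ (H : Type) (_ : CommGroup H) (f : G →* H),
      Function.Injective f ∧
      (∀ n : ℕ, n ≠ 0 → ∀ h : H, ∃ x : H, x ^ n = h) ∧
      (∀ K : Subgroup H, K ≠ ⊥ → f.range ⊓ K ≠ ⊥) := by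
  let ι := characterEmbedding G
  have := Group.rootableByNatOfRootableByInt
    (Multiplicative (CharacterModule (Additive G) → AddCircle (1 : ℚ)))
  obtain ⟨C, hC⟩ := ι.range.exists_maximal_disjoint
  refine ⟨_ ⧸ C, inferInstance, (QuotientGroup.mk' C).comp ι,
    injective_mk'_comp_of_maximal_disjoint (characterEmbedding_injective G) hC,
    fun n hn => RootableBy.surjective_pow _ ℕ hn, ?_⟩
  rw [MonoidHom.range_comp]
  exact isEssential_map_mk'_of_maximal_disjoint hC
end

section
/- For every nonempty set P of primes, the class Q_P of abelian groups satisfying the quasi-equations {x^p = 1 → x = 1 : p ∈ P} has the amalgamation property: for any G, B, C in Q_P with embeddings φ₁ : G → B and φ₂ : G → C, there exist D in Q_P and embeddings ψ₁ : B → D, ψ₂ : C → D with ψ₁ ∘ φ₁ = ψ₂ ∘ φ₂. -/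
lemma aux_smooth_pow_eq_one {P : Set ℕ} {H : Type*} [CommGroup H]
    (hH : ∀ p ∈ P, ∀ x : H, x ^ p = 1 → x = 1) :
    ∀ n : ℕ, 0 < n → (∀ q : ℕ, q.Prime → q ∣ n → q ∈ P) → ∀ x : H, x ^ n = 1 → x = 1 := by
  intro n
  induction n using Nat.strong_induction_on with
  | _ n ih =>
    intro hn hsm x hx
    rcases Nat.lt_or_ge n 2 with h1 | h2
    · have : n = 1 := by omega
      simpa [this] using hx
    · obtain ⟨q, hq, hqd⟩ := Nat.exists_prime_and_dvd (by omega : n ≠ 1)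
      obtain ⟨m, hm⟩ := hqd
      have hq2 := hq.two_le
      have hm0 : 0 < m := by
        rcases Nat.eq_zero_or_pos m with h | h
        · subst h; omega
        · exact h
      have hmlt : m < n := by subst hm; nlinarith
      have hxm : (x ^ m) ^ q = 1 := by
        rw [← pow_mul, Nat.mul_comm, ← hm, hx]
      have hxm1 : x ^ m = 1 := hH q (hsm q hq ⟨m, hm⟩) _ hxm
      exact ih m hmlt hm0 (fun r hr hrd => hsm r hr (hrd.trans ⟨q, by rw [hm, Nat.mul_comm]⟩)) x hxm1

/-- For every nonempty set `P` of primes, the class `Q_P` of abelian groups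
satisfying `x^p = 1 → x = 1` for all `p ∈ P` has the amalgamation property. -/
theorem stmt_3 (P : Set ℕ) (hP : ∀ p ∈ P, p.Prime) (hne : P.Nonempty)
    (G B C : Type) [CommGroup G] [CommGroup B] [CommGroup C]
    (hG : ∀ p ∈ P, ∀ g : G, g ^ p = 1 → g = 1)
    (hB : ∀ p ∈ P, ∀ b : B, b ^ p = 1 → b = 1)
    (hC : ∀ p ∈ P, ∀ c : C, c ^ p = 1 → c = 1)
    (φ₁ : G →* B) (φ₂ : G →* C)
    (hφ₁ : Function.Injective φ₁) (hφ₂ : Function.Injective φ₂) :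
    ∃ (D : Type) (_ : CommGroup D) (ψ₁ : B →* D) (ψ₂ : C →* D),
      (∀ p ∈ P, ∀ d : D, d ^ p = 1 → d = 1) ∧
      Function.Injective ψ₁ ∧ Function.Injective ψ₂ ∧
      ψ₁.comp φ₁ = ψ₂.comp φ₂ := by
  classical
  -- the antidiagonal embedding of G into B × C
  set f : G →* B × C := φ₁.prod (φ₂⁻¹) with hf
  set N : Subgroup (B × C) := f.range with hN
  -- pushout
  set D₀ := (B × C) ⧸ N with hD₀
  set π : (B × C) →* D₀ := QuotientGroup.mk' N with hπ
  -- the P-torsion subgroup of D₀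
  set T : Subgroup D₀ :=
    { carrier := {x | ∃ n : ℕ, 0 < n ∧ (∀ q : ℕ, q.Prime → q ∣ n → q ∈ P) ∧ x ^ n = 1}
      one_mem' := ⟨1, one_pos, fun q hq hd => absurd (Nat.dvd_one.mp hd) hq.ne_one, one_pow 1⟩
      mul_mem' := by
        rintro x y ⟨m, hm0, hmsm, hxm⟩ ⟨n, hn0, hnsm, hyn⟩
        refine ⟨m * n, Nat.mul_pos hm0 hn0, ?_, ?_⟩
        · intro q hq hd
          rcases (Nat.Prime.dvd_mul hq).mp hd with h | h
          · exact hmsm q hq h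
          · exact hnsm q hq h
        · rw [mul_pow, pow_mul, hxm, one_pow, Nat.mul_comm, pow_mul, hyn, one_pow, one_mul]
      inv_mem' := by
        rintro x ⟨n, hn0, hnsm, hxn⟩
        exact ⟨n, hn0, hnsm, by rw [inv_pow, hxn, inv_one]⟩ } with hT
  set D := D₀ ⧸ T with hD
  set ρ : D₀ →* D := QuotientGroup.mk' T with hρ
  refine ⟨D, inferInstance, (ρ.comp π).comp (MonoidHom.inl B C),
    (ρ.comp π).comp (MonoidHom.inr B C), ?_, ?_, ?_, ?_⟩
  · -- no P-torsion in D
    intro p hp d hd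
    obtain ⟨x, rfl⟩ := QuotientGroup.mk'_surjective T d
    rw [← map_pow] at hd
    rw [QuotientGroup.mk'_apply, QuotientGroup.eq_one_iff] at hd ⊢
    obtain ⟨n, hn0, hnsm, hxn⟩ := hd
    refine ⟨p * n, Nat.mul_pos (hP p hp).pos hn0, ?_, by rwa [pow_mul]⟩
    intro q hq hd
    rcases (Nat.Prime.dvd_mul hq).mp hd with h | h
    · rwa [(Nat.prime_dvd_prime_iff_eq hq (hP p hp)).mp h]
    · exact hnsm q hq h
  · -- ψ₁ injective
    intro b₁ b₂ hb
    have : ((ρ.comp π).comp (MonoidHom.inl B C)) (b₁ * b₂⁻¹) = 1 := by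
      rw [map_mul, map_inv, hb, mul_inv_cancel]
    set b := b₁ * b₂⁻¹ with hbdef
    suffices hb1 : b = 1 by
      have := hb1
      rw [hbdef, mul_inv_eq_one] at this
      exact this
    simp only [MonoidHom.comp_apply, MonoidHom.inl_apply] at this
    rw [QuotientGroup.mk'_apply, QuotientGroup.eq_one_iff] at this
    obtain ⟨n, hn0, hnsm, hxn⟩ := this
    rw [hπ, ← map_pow, QuotientGroup.mk'_apply, QuotientGroup.eq_one_iff] at hxn
    obtain ⟨g, hg⟩ := hxn
    have hg2 : (φ₂ g)⁻¹ = 1 := by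
      simpa [hf, Prod.pow_snd] using congrArg Prod.snd hg
    have hg1 : g = 1 := hφ₂ (by rw [map_one]; exact inv_eq_one.mp hg2)
    have hbn : b ^ n = 1 := by
      have := congrArg Prod.fst hg
      simp only [hf, MonoidHom.prod_apply, Prod.pow_fst] at this
      rw [hg1, map_one] at this
      exact this.symm
    exact aux_smooth_pow_eq_one hB n hn0 hnsm b hbn
  · -- ψ₂ injective
    intro c₁ c₂ hc
    have : ((ρ.comp π).comp (MonoidHom.inr B C)) (c₁ * c₂⁻¹) = 1 := by
      rw [map_mul, map_inv, hc, mul_inv_cancel]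
    set c := c₁ * c₂⁻¹ with hcdef
    suffices hc1 : c = 1 by
      have := hc1
      rw [hcdef, mul_inv_eq_one] at this
      exact this
    simp only [MonoidHom.comp_apply, MonoidHom.inr_apply] at this
    rw [QuotientGroup.mk'_apply, QuotientGroup.eq_one_iff] at this
    obtain ⟨n, hn0, hnsm, hxn⟩ := this
    rw [hπ, ← map_pow, QuotientGroup.mk'_apply, QuotientGroup.eq_one_iff] at hxn
    obtain ⟨g, hg⟩ := hxn
    have hg1' : φ₁ g = 1 := by
      simpa [hf, Prod.pow_fst] using congrArg Prod.fst hg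
    have hg1 : g = 1 := hφ₁ (by rw [map_one]; exact hg1')
    have hcn : c ^ n = 1 := by
      have := congrArg Prod.snd hg
      simp only [hf, MonoidHom.prod_apply, Prod.pow_snd] at this
      rw [hg1, map_one] at this
      simpa using this.symm
    exact aux_smooth_pow_eq_one hC n hn0 hnsm c hcn
  · -- commutativity
    ext g
    simp only [MonoidHom.comp_apply, MonoidHom.inl_apply, MonoidHom.inr_apply]
    apply congrArg ρ
    rw [hπ]
    rw [QuotientGroup.mk'_eq_mk']
    refine ⟨f g⁻¹, ⟨g⁻¹, rfl⟩, ?_⟩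
    simp [hf, Prod.ext_iff]
end

section
/- Let K be a class of similar algebras closed under finite products. If K has enough injectives (every member of K embeds into a member of K that is injective over K), then K has the amalgamation property. -/
/-- An interpretation of an algebraic signature (operation symbols `ι` with arities `ar`)
on a carrier `M`. -/
def AlgOps (ι : Type) (ar : ι → ℕ) (M : Type) : Type :=
  (i : ι) → (Fin (ar i) → M) → M

/-- Homomorphism of algebras over the signature `(ι, ar)`. -/
def IsAlgHom {ι : Type} {ar : ι → ℕ} {M N : Type}
    (opM : AlgOps ι ar M) (opN : AlgOps ι ar N) (f : M → N) : Prop :=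
  ∀ (i : ι) (x : Fin (ar i) → M), f (opM i x) = opN i (fun j => f (x j))

/-- Componentwise operations on a binary product of algebras. -/
def prodOps {ι : Type} {ar : ι → ℕ} {M N : Type}
    (opM : AlgOps ι ar M) (opN : AlgOps ι ar N) : AlgOps ι ar (M × N) :=
  fun i x => (opM i (fun j => (x j).1), opN i (fun j => (x j).2))

/-- If a class `K` of similar algebras is closed under finite products and
has enough injectives, then `K` has the amalgamation property. -/
theorem stmt_4 (ι : Type) (ar : ι → ℕ)
    (K : (M : Type) → AlgOps ι ar M → Prop)
    (hprod : ∀ (M N : Type) (opM : AlgOps ι ar M) (opN : AlgOps ι ar N),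
      K M opM → K N opN → K (M × N) (prodOps opM opN))
    (henough : ∀ (M : Type) (opM : AlgOps ι ar M), K M opM →
      ∃ (Q : Type) (opQ : AlgOps ι ar Q) (e : M → Q),
        K Q opQ ∧ IsAlgHom opM opQ e ∧ Function.Injective e ∧
        -- `Q` is injective over `K`:
        (∀ (A B : Type) (opA : AlgOps ι ar A) (opB : AlgOps ι ar B),
          K A opA → K B opB →
          ∀ (α : B → A) (β : B → Q), IsAlgHom opB opA α → Function.Injective α →
            IsAlgHom opB opQ β →
            ∃ φ : A → Q, IsAlgHom opA opQ φ ∧ ∀ b : B, φ (α b) = β b)) :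
    -- amalgamation property:
    ∀ (A B C : Type) (opA : AlgOps ι ar A) (opB : AlgOps ι ar B) (opC : AlgOps ι ar C),
      K A opA → K B opB → K C opC →
      ∀ (φ₁ : A → B) (φ₂ : A → C),
        IsAlgHom opA opB φ₁ → Function.Injective φ₁ →
        IsAlgHom opA opC φ₂ → Function.Injective φ₂ →
        ∃ (D : Type) (opD : AlgOps ι ar D) (ψ₁ : B → D) (ψ₂ : C → D),
          K D opD ∧ IsAlgHom opB opD ψ₁ ∧ Function.Injective ψ₁ ∧
          IsAlgHom opC opD ψ₂ ∧ Function.Injective ψ₂ ∧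
          ∀ a : A, ψ₁ (φ₁ a) = ψ₂ (φ₂ a) := by
  intro A B C opA opB opC hA hB hC φ₁ φ₂ h₁ inj₁ h₂ inj₂
  obtain ⟨Q₁, opQ₁, e₁, hQ₁, he₁, inje₁, hinj₁⟩ := henough B opB hB
  obtain ⟨Q₂, opQ₂, e₂, hQ₂, he₂, inje₂, hinj₂⟩ := henough C opC hC
  -- extend e₁ ∘ φ₁ : A → Q₁ along φ₂ : A → C
  obtain ⟨χ₁, hχ₁hom, hχ₁⟩ := hinj₁ C A opC opA hC hA φ₂ (fun a => e₁ (φ₁ a)) h₂ inj₂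
    (fun i x => by dsimp only; rw [h₁, he₁])
  obtain ⟨χ₂, hχ₂hom, hχ₂⟩ := hinj₂ B A opB opA hB hA φ₁ (fun a => e₂ (φ₂ a)) h₁ inj₁
    (fun i x => by dsimp only; rw [h₂, he₂])
  refine ⟨Q₁ × Q₂, prodOps opQ₁ opQ₂, fun b => (e₁ b, χ₂ b), fun c => (χ₁ c, e₂ c),
    hprod _ _ _ _ hQ₁ hQ₂, ?_, ?_, ?_, ?_, ?_⟩
  · intro i x; exact Prod.ext (he₁ i x) (hχ₂hom i x)
  · intro b b' h; exact inje₁ (congrArg Prod.fst h)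
  · intro i x; exact Prod.ext (hχ₁hom i x) (he₂ i x)
  · intro c c' h; exact inje₂ (congrArg Prod.snd h)
  · intro a; exact Prod.ext (hχ₁ a).symm (hχ₂ a)
end

section
/- For any abelian group G, the residuated lattice R(G) is a simple algebra: its only congruences are the diagonal and the total relation. -/
/-- `Flat G`: the underlying set `G ∪ {⊥, ⊤}` of the residuated lattice `R(G)`. -/
inductive Flat (G : Type) where
  | bot : Flat G
  | top : Flat G
  | of : G → Flat G

namespace Flat

variable {G : Type}

/-- The flat order on `G ∪ {⊥, ⊤}`: `⊥ < g < ⊤` for `g ∈ G`, with distinct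
elements of `G` incomparable. -/
def fle : Flat G → Flat G → Prop
  | bot, _ => True
  | _, top => True
  | of a, of b => a = b
  | _, _ => False

/-- Meet in the flat bounded lattice. -/
def finf [DecidableEq G] : Flat G → Flat G → Flat G
  | bot, _ => bot
  | _, bot => bot
  | top, x => x
  | x, top => x
  | of a, of b => if a = b then of a else bot

/-- Join in the flat bounded lattice. -/
def fsup [DecidableEq G] : Flat G → Flat G → Flat G
  | top, _ => top
  | _, top => top
  | bot, x => x
  | x, bot => x
  | of a, of b => if a = b then of a else top

/-- Multiplication on `R(G)`: the group multiplication extended so that `⊥` is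
absorbing everywhere and `⊤` is absorbing on `G ∪ {⊤}`. -/
def fmul [Mul G] : Flat G → Flat G → Flat G
  | bot, _ => bot
  | _, bot => bot
  | top, _ => top
  | _, top => top
  | of a, of b => of (a * b)

/-- The residual `a → c = max {b : a · b ≤ c}` of `R(G)`. -/
def fres [Group G] : Flat G → Flat G → Flat G
  | bot, _ => top
  | _, top => top
  | top, _ => bot
  | of _, bot => bot
  | of a, of b => of (a⁻¹ * b)

end Flat

open Flat in
/-- `R(G)` is simple: every congruence (equivalence relation compatible
with `∧`, `∨`, `·`, `→`, `1`) is the diagonal or the total relation. -/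
theorem stmt_11 (G : Type) [CommGroup G] [DecidableEq G]
    (r : Flat G → Flat G → Prop) (hequiv : Equivalence r)
    (hinf : ∀ a b c d : Flat G, r a b → r c d → r (finf a c) (finf b d))
    (hsup : ∀ a b c d : Flat G, r a b → r c d → r (fsup a c) (fsup b d))
    (hmul : ∀ a b c d : Flat G, r a b → r c d → r (fmul a c) (fmul b d))
    (hres : ∀ a b c d : Flat G, r a b → r c d → r (fres a c) (fres b d)) :
    (∀ a b : Flat G, r a b ↔ a = b) ∨ (∀ a b : Flat G, r a b) := by
  by_cases hd : ∀ a b : Flat G, r a b → a = b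
  · left
    exact fun a b => ⟨hd a b, fun h => h ▸ hequiv.refl a⟩
  · right
    push_neg at hd
    obtain ⟨a, b, hab, hne⟩ := hd
    -- from r (of g) ⊥ we get r (of 1) ⊤
    have step1 : ∀ g : G, r (of g) Flat.bot → r (of (1:G)) Flat.top := by
      intro g h
      have h2 := hres (of g) Flat.bot (of g) (of g) h (hequiv.refl _)
      simpa [fres] using h2
    have step2 : r (of (1:G)) Flat.top → r Flat.bot Flat.top := by
      intro h
      have h2 := hres (of (1:G)) Flat.top (of (1:G)) (of (1:G)) h (hequiv.refl _)
      have h3 : r (of (1:G)) Flat.bot := by simpa [fres] using h2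
      exact hequiv.trans (hequiv.symm h3) h
    have stepg : ∀ g : G, r (of g) Flat.bot → r Flat.bot Flat.top :=
      fun g h => step2 (step1 g h)
    have hbt : r Flat.bot Flat.top := by
      cases a with
      | bot =>
        cases b with
        | bot => exact absurd rfl hne
        | top => exact hab
        | of g =>
          have h2 := hres Flat.bot (of g) Flat.bot Flat.bot hab (hequiv.refl _)
          simp only [fres] at h2
          exact hequiv.symm h2
      | top =>
        cases b with
        | bot => exact hequiv.symm hab
        | top => exact absurd rfl hne
        | of g =>
          have h2 := hres Flat.top (of g) (of g) (of g) hab (hequiv.refl _)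
          have h3 : r (of (1:G)) Flat.bot := by simpa [fres] using hequiv.symm h2
          exact stepg 1 h3
      | of g =>
        cases b with
        | bot => exact stepg g hab
        | top =>
          have h2 := hres (of g) Flat.top (of g) (of g) hab (hequiv.refl _)
          have h3 : r (of (1:G)) Flat.bot := by simpa [fres] using h2
          exact stepg 1 h3
        | of g' =>
          have hgg' : g ≠ g' := fun e => hne (by rw [e])
          have h2 := hinf (of g) (of g') (of g) (of g) hab (hequiv.refl _)
          have h3 : r (of g) Flat.bot := by simpa [finf, hgg'.symm] using h2
          exact stepg g h3
    have hbx : ∀ x : Flat G, r Flat.bot x := by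
      intro x
      have h2 := hinf Flat.bot Flat.top x x hbt (hequiv.refl x)
      cases x <;> simpa [finf] using h2
    exact fun a b => hequiv.trans (hequiv.symm (hbx a)) (hbx b)
end

section
/- Every group embedding α : G → H between abelian groups extends uniquely to a residuated-lattice embedding β : R(G) → R(H) with β(⊥) = ⊥ and β(⊤) = ⊤, and conversely every residuated-lattice embedding R(G) → R(H) restricts to a group embedding G → H. -/
/-- A residuated-lattice embedding `R(G) → R(H)`: an injective map preserving
`∧`, `∨`, `·`, `→`, `1`, `⊥`, and `⊤`. -/
def IsRLEmb {G H : Type} [CommGroup G] [CommGroup H] [DecidableEq G] [DecidableEq H]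
    (β : Flat G → Flat H) : Prop :=
  Function.Injective β ∧
  (∀ a b : Flat G, β (Flat.finf a b) = Flat.finf (β a) (β b)) ∧
  (∀ a b : Flat G, β (Flat.fsup a b) = Flat.fsup (β a) (β b)) ∧
  (∀ a b : Flat G, β (Flat.fmul a b) = Flat.fmul (β a) (β b)) ∧
  (∀ a b : Flat G, β (Flat.fres a b) = Flat.fres (β a) (β b)) ∧
  β (Flat.of 1) = Flat.of 1 ∧ β Flat.bot = Flat.bot ∧ β Flat.top = Flat.top

open Flat in
/-- Every group embedding `α : G → H` between abelian groups extends
uniquely to a residuated-lattice embedding `β : R(G) → R(H)` (with `β ⊥ = ⊥`,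
`β ⊤ = ⊤`), and conversely every residuated-lattice embedding `R(G) → R(H)`
restricts to a group embedding `G → H`. -/
theorem stmt_13 (G H : Type) [CommGroup G] [CommGroup H] [DecidableEq G] [DecidableEq H] :
    (∀ α : G →* H, Function.Injective α →
      ∃! β : Flat G → Flat H,
        IsRLEmb β ∧ (∀ g : G, β (of g) = of (α g)) ∧ β bot = bot ∧ β top = top) ∧
    (∀ β : Flat G → Flat H, IsRLEmb β →
      ∃ α : G →* H, Function.Injective α ∧ ∀ g : G, β (of g) = of (α g)) := by
  constructor
  · intro α hα
    refine ⟨fun x => match x with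
      | bot => bot
      | top => top
      | of g => of (α g), ⟨⟨?_, ?_, ?_, ?_, ?_, ?_, rfl, rfl⟩, fun g => rfl, rfl, rfl⟩, ?_⟩
    · intro x y h
      cases x <;> cases y <;> simp_all
      exact hα h
    · intro a b
      cases a <;> cases b <;> simp only [finf]
      rename_i a b
      by_cases h : a = b
      · subst h; simp
      · rw [if_neg h, if_neg (fun hh => h (hα hh))]
    · intro a b
      cases a <;> cases b <;> simp only [fsup]
      rename_i a b
      by_cases h : a = b
      · subst h; simp
      · rw [if_neg h, if_neg (fun hh => h (hα hh))]
    · intro a b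
      cases a <;> cases b <;> simp [fmul]
    · intro a b
      cases a <;> cases b <;> simp [fres]
    · simp
    · intro β ⟨_, hof, hbot, htop⟩
      funext x
      cases x
      · exact hbot
      · exact htop
      · exact hof _
  · intro β ⟨hinj, _, _, hmul, _, hone, hbot, htop⟩
    have key : ∀ g : G, ∃ h : H, β (of g) = of h := by
      intro g
      cases hx : β (of g) with
      | bot => exact absurd (hinj (hx.trans hbot.symm)) (by simp)
      | top => exact absurd (hinj (hx.trans htop.symm)) (by simp)
      | of h => exact ⟨h, rfl⟩
    choose f hf using key
    have fmul' : ∀ a b : G, f (a * b) = f a * f b := by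
      intro a b
      have h2 := hmul (of a) (of b)
      simp only [fmul, hf] at h2
      injection h2
    refine ⟨MonoidHom.mk' f fmul', ?_, fun g => hf g⟩
    intro a b h
    have : β (of a) = β (of b) := by rw [hf, hf]; exact congrArg of h
    have := hinj this
    injection this
end

section
/- Given a span of abelian groups G, B, C in Q_P with embeddings φ₁ : G → B, φ₂ : G → C, and an amalgam D ∈ Q_P with embeddings ψ₁ : B → D, ψ₂ : C → D such that ψ₁φ₁ = ψ₂φ₂, the extensions of these maps to the residuated lattices R(B), R(C), R(D) (sending ⊥ to ⊥ and ⊤ to ⊤) amalgamate the span R(G) → R(B), R(G) → R(C) in the class of residuated lattices of the form R(H) with H ∈ Q_P. -/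
/-- The canonical lift of a group homomorphism `φ : B → D` to a map
`R(B) → R(D)` sending `⊥ ↦ ⊥` and `⊤ ↦ ⊤`. -/
def Rmap {B D : Type} [CommGroup B] [CommGroup D] (φ : B →* D) : Flat B → Flat D
  | Flat.bot => Flat.bot
  | Flat.top => Flat.top
  | Flat.of b => Flat.of (φ b)


lemma rmap_emb {B D : Type} [CommGroup B] [CommGroup D] [DecidableEq B] [DecidableEq D]
    (φ : B →* D) (hφ : Function.Injective φ) : IsRLEmb (Rmap φ) := by
  refine ⟨?_, ?_, ?_, ?_, ?_, ?_, rfl, rfl⟩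
  · intro x y h
    cases x <;> cases y <;> simp [Rmap] at h ⊢ <;> exact hφ h
  · intro a b
    cases a <;> cases b <;> simp only [Rmap, Flat.finf] <;>
      first
      | rfl
      | (rename_i x y
         by_cases h : x = y
         · simp [h]
         · simp only [if_neg h, if_neg (fun hh => h (hφ hh))])
  · intro a b
    cases a <;> cases b <;> simp only [Rmap, Flat.fsup] <;>
      first
      | rfl
      | (rename_i x y
         by_cases h : x = y
         · simp [h]
         · simp only [if_neg h, if_neg (fun hh => h (hφ hh))])
  · intro a b
    cases a <;> cases b <;> simp [Rmap, Flat.fmul]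
  · intro a b
    cases a <;> cases b <;> simp [Rmap, Flat.fres]
  · simp [Rmap]

open Flat in
/-- Given a span `φ₁ : G → B`, `φ₂ : G → C` in `Q_P` and an amalgam
`ψ₁ : B → D`, `ψ₂ : C → D` in `Q_P` with `ψ₁φ₁ = ψ₂φ₂`, the lifted maps (sending
`⊥ ↦ ⊥`, `⊤ ↦ ⊤`) amalgamate the span `R(G) → R(B)`, `R(G) → R(C)` within the class
of algebras `R(H)` with `H ∈ Q_P` (witnessed by `R(D)` with `D ∈ Q_P`). -/
theorem stmt_14 (P : Set ℕ) (hP : ∀ p ∈ P, p.Prime)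
    (G B C D : Type) [CommGroup G] [CommGroup B] [CommGroup C] [CommGroup D]
    [DecidableEq G] [DecidableEq B] [DecidableEq C] [DecidableEq D]
    (hG : ∀ p ∈ P, ∀ g : G, g ^ p = 1 → g = 1)
    (hB : ∀ p ∈ P, ∀ b : B, b ^ p = 1 → b = 1)
    (hC : ∀ p ∈ P, ∀ c : C, c ^ p = 1 → c = 1)
    (hD : ∀ p ∈ P, ∀ d : D, d ^ p = 1 → d = 1)
    (φ₁ : G →* B) (φ₂ : G →* C) (ψ₁ : B →* D) (ψ₂ : C →* D)
    (hφ₁ : Function.Injective φ₁) (hφ₂ : Function.Injective φ₂)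
    (hψ₁ : Function.Injective ψ₁) (hψ₂ : Function.Injective ψ₂)
    (hcomm : ψ₁.comp φ₁ = ψ₂.comp φ₂) :
    IsRLEmb (Rmap φ₁) ∧ IsRLEmb (Rmap φ₂) ∧
    IsRLEmb (Rmap ψ₁) ∧ IsRLEmb (Rmap ψ₂) ∧
    ∀ x : Flat G, Rmap ψ₁ (Rmap φ₁ x) = Rmap ψ₂ (Rmap φ₂ x) := by
  refine ⟨rmap_emb φ₁ hφ₁, rmap_emb φ₂ hφ₂, rmap_emb ψ₁ hψ₁, rmap_emb ψ₂ hψ₂, ?_⟩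
  intro x
  cases x with
  | bot => rfl
  | top => rfl
  | of g =>
    simp only [Rmap]
    have := DFunLike.congr_fun hcomm g
    simp only [MonoidHom.comp_apply] at this
    rw [this]
end

section
/- Let p be a prime and let A be a commutative residuated lattice satisfying x^p = 1 → x = 1 (i.e., the only element whose p-th power is the monoid identity is the identity itself). Let φ : R(Z) → R(Z) be the multiplication-by-p embedding (fixing ⊥, ⊤). If ψ₁, ψ₂ : R(Z) → A are homomorphisms with ψ₁ ∘ φ = ψ₂ ∘ φ, then ψ₁ = ψ₂. Hence φ is a non-surjective epimorphism in any such class of algebras. -/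
/-- Multiplication by `p` on `R(Z)` (with `Z` written multiplicatively), fixing `⊥, ⊤`. -/
def mulByP (p : ℕ) : Flat (Multiplicative ℤ) → Flat (Multiplicative ℤ)
  | Flat.bot => Flat.bot
  | Flat.top => Flat.top
  | Flat.of a => Flat.of (a ^ p)

/-- A residuated-lattice homomorphism from `R(Z)` into a commutative residuated lattice
`(A, ⊓, ⊔, *, himp, 1)`: it preserves `∧`, `∨`, `·`, `→`, and `1`. -/
def IsRLHomTo {A : Type} [Lattice A] [CommMonoid A] (himp : A → A → A)
    (f : Flat (Multiplicative ℤ) → A) : Prop :=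
  (∀ a b, f (Flat.finf a b) = f a ⊓ f b) ∧
  (∀ a b, f (Flat.fsup a b) = f a ⊔ f b) ∧
  (∀ a b, f (Flat.fmul a b) = f a * f b) ∧
  (∀ a b, f (Flat.fres a b) = himp (f a) (f b)) ∧
  f (Flat.of 1) = 1

/-- Let `p` be prime and `A` a commutative residuated lattice satisfying
`x^p = 1 → x = 1`. If `ψ₁, ψ₂ : R(Z) → A` are homomorphisms agreeing on the image of the
multiplication-by-`p` embedding `φ : R(Z) → R(Z)`, then `ψ₁ = ψ₂`; moreover `φ` is not
surjective. Hence `φ` is a non-surjective epimorphism. -/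
theorem stmt_18 (p : ℕ) (hp : p.Prime)
    (A : Type) [Lattice A] [CommMonoid A]
    (himp : A → A → A)
    (res : ∀ a b c : A, a * b ≤ c ↔ a ≤ himp b c)
    (hA : ∀ x : A, x ^ p = 1 → x = 1) :
    (∀ ψ₁ ψ₂ : Flat (Multiplicative ℤ) → A,
      IsRLHomTo himp ψ₁ → IsRLHomTo himp ψ₂ →
      (∀ x, ψ₁ (mulByP p x) = ψ₂ (mulByP p x)) → ψ₁ = ψ₂) ∧
    ¬ Function.Surjective (mulByP p) := by
  constructor
  · intro ψ₁ ψ₂ h₁ h₂ hagree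
    obtain ⟨-, -, hm₁, -, hu₁⟩ := h₁
    obtain ⟨-, -, hm₂, -, hu₂⟩ := h₂
    have pow₁ : ∀ (a : Multiplicative ℤ) (n : ℕ), ψ₁ (Flat.of (a ^ n)) = (ψ₁ (Flat.of a)) ^ n := by
      intro a n
      induction n with
      | zero => simpa using hu₁
      | succ n ih =>
        have := hm₁ (Flat.of (a ^ n)) (Flat.of a)
        simp only [Flat.fmul] at this
        rw [pow_succ, this, ih, pow_succ]
    have pow₂ : ∀ (a : Multiplicative ℤ) (n : ℕ), ψ₂ (Flat.of (a ^ n)) = (ψ₂ (Flat.of a)) ^ n := by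
      intro a n
      induction n with
      | zero => simpa using hu₂
      | succ n ih =>
        have := hm₂ (Flat.of (a ^ n)) (Flat.of a)
        simp only [Flat.fmul] at this
        rw [pow_succ, this, ih, pow_succ]
    funext x
    cases x with
    | bot => exact hagree Flat.bot
    | top => exact hagree Flat.top
    | of a =>
      have hinv₂ : ψ₂ (Flat.of a⁻¹) * ψ₂ (Flat.of a) = 1 := by
        have := hm₂ (Flat.of a⁻¹) (Flat.of a)
        simp only [Flat.fmul] at this
        rw [← this]
        simpa using hu₂
      have hx : (ψ₁ (Flat.of a) * ψ₂ (Flat.of a⁻¹)) ^ p = 1 := by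
        rw [mul_pow, ← pow₁, ← pow₂]
        have h1 : ψ₁ (Flat.of (a ^ p)) = ψ₂ (Flat.of (a ^ p)) := hagree (Flat.of a)
        rw [h1]
        have := hm₂ (Flat.of (a ^ p)) (Flat.of (a⁻¹ ^ p))
        simp only [Flat.fmul] at this
        rw [← this]
        have : (a : Multiplicative ℤ) ^ p * a⁻¹ ^ p = 1 := by
          rw [← mul_pow, mul_inv_cancel, one_pow]
        rw [this, hu₂]
      have hone : ψ₁ (Flat.of a) * ψ₂ (Flat.of a⁻¹) = 1 := hA _ hx
      calc ψ₁ (Flat.of a) = ψ₁ (Flat.of a) * (ψ₂ (Flat.of a⁻¹) * ψ₂ (Flat.of a)) := by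
            rw [hinv₂, mul_one]
        _ = (ψ₁ (Flat.of a) * ψ₂ (Flat.of a⁻¹)) * ψ₂ (Flat.of a) := by rw [mul_assoc]
        _ = ψ₂ (Flat.of a) := by rw [hone, one_mul]
  · intro hsurj
    obtain ⟨x, hx⟩ := hsurj (Flat.of (Multiplicative.ofAdd 1))
    cases x with
    | bot => simp [mulByP] at hx
    | top => simp [mulByP] at hx
    | of a =>
      simp only [mulByP, Flat.of.injEq] at hx
      have : (p : ℤ) * Multiplicative.toAdd a = 1 := by
        have := congrArg Multiplicative.toAdd hx
        simpa [toAdd_pow, mul_comm] using this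
      have hdvd : (p : ℤ) ∣ 1 := ⟨_, this.symm⟩
      have := Int.eq_one_of_dvd_one (by positivity) hdvd
      have : p = 1 := by exact_mod_cast this
      exact hp.one_lt.ne' this
end
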